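/- Let (V,d,b) be an acyclic information network, run the Path-Effect process for T steps with transient initial set A ⊆ V\{d}. Let v be a non-void node, let u ∈ V with b v u > 0, let 1 ≤ t ≤ T, and let W = Γ(v) = {u : b v u > 0}. Then for every Q ∈ {0,1}^{W×{1,…,T}}: Pr[{ω : P^t_v[t](ω) = u} ∩ {ω : Π_W(ω) = Q}] = b v u · Pr[{ω : Π_W(ω) = Q}]. -/

import Mathlib

open MeasureTheory

/-- An information network: a finite node set `V` with a distinguished void node `d`
and a row-stochastic weight matrix `b` with entries in `[0,1]` and `b d d = 1`. -/
structure InfoNetwork (V : Type*) [Fintype V] where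
  d : V
  b : V → V → ℝ
  b_nonneg : ∀ v u, 0 ≤ b v u
  b_le_one : ∀ v u, b v u ≤ 1
  row_sum : ∀ v, ∑ u, b v u = 1
  void_loop : b d d = 1

/-- The uniform probability measure on the interval `(0,1)`. -/
noncomputable def unifMeasure : Measure ℝ := volume.restrict (Set.Ioo (0:ℝ) 1)

/-- Product over `V` of uniform measures on `(0,1)`: the distribution of the thresholds. -/
noncomputable def thresholdMeasure (V : Type*) [Fintype V] : Measure (V → ℝ) :=
  Measure.pi fun _ : V => unifMeasure

namespace InfoNetwork

variable {V : Type*} [Fintype V]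

/-- The set of active nodes at time `t` under the non-progressive linear threshold model,
with transient initial set `A`, permanent initial set `Ahat` and thresholds `θ`. -/
noncomputable def activeSet (N : InfoNetwork V) (A Ahat : Set V) (θ : V → ℝ) : ℕ → Set V
  | 0 => A ∪ Ahat
  | t+1 => Ahat ∪
      {v | v ∉ Ahat ∧ θ v ≤ ∑ u, (N.activeSet A Ahat θ t).indicator (N.b v) u}

/-- `E[X^t_v(A,Ahat)]`: the probability (over the random thresholds) that `v` is active
at time `t`. -/
noncomputable def EX (N : InfoNetwork V) (A Ahat : Set V) (t : ℕ) (v : V) : ℝ :=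
  (thresholdMeasure V {θ | v ∈ N.activeSet A Ahat θ t}).toReal

/-- The expected influence over the period `[1,T]`. -/
noncomputable def sigmaBar (N : InfoNetwork V) (T : ℕ) (A Ahat : Set V) : ℝ :=
  (1 / (T : ℝ)) * ∑ t ∈ Finset.Icc 1 T, ∑ v, N.EX A Ahat t v

/-- The edge relation of the directed graph on `V \ {d}`. -/
def edgeRel (N : InfoNetwork V) (v u : V) : Prop :=
  v ≠ N.d ∧ u ≠ N.d ∧ 0 < N.b v u

/-- The network is acyclic if the directed graph on `V \ {d}` has no directed cycle. -/
def Acyclic (N : InfoNetwork V) : Prop :=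
  ∀ v, ¬ Relation.TransGen N.edgeRel v v

end InfoNetwork

/-- A real-valued set function `f` is submodular on the ground set `S`. -/
def SubmodularOn {V : Type*} (S : Set V) (f : Set V → ℝ) : Prop :=
  ∀ A B : Set V, A ⊆ B → B ⊆ S → ∀ w ∈ S, w ∉ B →
    f (insert w B) - f B ≤ f (insert w A) - f A

open scoped Classical in
/-- Inverse-CDF selection: the first element `u` of `s` (in the linear order) at which the
cumulative sum of the probabilities `p` reaches `x`; if there is none, a default value. -/
noncomputable def pick {V : Type*} [LinearOrder V] (s : Finset V) (p : V → ℝ) (x : ℝ)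
    (dflt : V) : V :=
  if h : (s.filter fun u => x ≤ ∑ w ∈ s.filter (· ≤ u), p w).Nonempty
  then (s.filter fun u => x ≤ ∑ w ∈ s.filter (· ≤ u), p w).min' h
  else dflt

open scoped Classical in
/-- The influence paths `P^t_v` of the Path-Effect process: `pePath N T A θ ξ t v j` is the
entry `P^t_v[j]` (entries with `j > t` are junk, set to the void node).  Here `θ` are the
thresholds and `ξ (v, i)` is the auxiliary selection variable of node `v` for time `i + 1`. -/
noncomputable def pePath {V : Type*} [Fintype V] [LinearOrder V] (N : InfoNetwork V)
    (T : ℕ) (A : Set V) (θ : V → ℝ) (ξ : V × Fin T → ℝ) : ℕ → V → ℕ → V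
  | 0 => fun v j => if j = 0 then v else N.d
  | t+1 => fun v j =>
      let prev := pePath N T A θ ξ t
      let At : Finset V := Finset.univ.filter fun u => prev u 0 ∈ A
      let f : ℝ := ∑ u ∈ At, N.b v u
      let x : ℝ := if h : t < T then ξ (v, ⟨t, h⟩) else 0
      let u : V :=
        if θ v ≤ f then
          pick (Finset.univ.filter fun u => 0 < N.b v u ∧ u ∈ At) (fun w => N.b v w / f) x N.d
        else
          pick (Finset.univ.filter fun u => 0 < N.b v u ∧ u ∉ At)
            (fun w => N.b v w / (1 - f)) x N.d
      if j = t + 1 then u else prev u j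

/-- The probability measure of the Path-Effect process: product of uniform measures on
`(0,1)` for the thresholds `θ ∈ (0,1)^V` and for the auxiliary selection variables
`ξ ∈ (0,1)^{V×{1,…,T}}`. -/
noncomputable def peMeasure (V : Type*) [Fintype V] (T : ℕ) :
    MeasureTheory.Measure ((V → ℝ) × (V × Fin T → ℝ)) :=
  (MeasureTheory.Measure.pi fun _ : V => unifMeasure).prod
    (MeasureTheory.Measure.pi fun _ : V × Fin T => unifMeasure)

/-!
When all thresholds and selection variables lie in `(0,1)`, which happens almost surely, the
selection rule keeps `P^s_w[0]` inside `A` exactly when `w` is activated in the linear threshold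
model with thresholds `θ`. Hence the event `Π_W = Q` only depends on `θ`, and the last entry
`P^t_v[t]` is the choice of `v` from the active set at time `t - 1`, its threshold `θ_v` and
`ξ_{v,t}`. By acyclicity no out-neighbour of `v` can reach `v`, so neither `Π_W` nor the
activity of the out-neighbours of `v` depends on `θ_v`. Integrating out `ξ_{v,t}` and `θ_v`
first, the choice of `v` is `u` with probability `F · (b v u / F)` if `u` is active and
`(1 - F) · (b v u / (1 - F))` if not, where `F` is the active weight of `Γ(v)`: either way
`b v u`, whatever the other thresholds.
-/

open MeasureTheory Function

namespace InfoNetwork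

variable {V : Type*} [Fintype V] (N : InfoNetwork V)

lemma b_void_eq_zero {u : V} (hu : u ≠ N.d) : N.b N.d u = 0 := by
  classical
  have hrow := N.row_sum N.d
  rw [← Finset.add_sum_erase _ _ (Finset.mem_univ N.d), N.void_loop] at hrow
  exact (Finset.sum_eq_zero_iff_of_nonneg fun w _ => N.b_nonneg N.d w).1 (by linarith) u
    (by simp [hu])

lemma edgeRel_of_pos {a c : V} (h : 0 < N.b a c) (hc : c ≠ N.d) : N.edgeRel a c := by
  refine ⟨?_, hc, h⟩
  rintro rfl
  exact h.ne' (N.b_void_eq_zero hc)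

lemma transGen_edgeRel_of_transGen {a c : V}
    (h : Relation.TransGen (fun a c => 0 < N.b a c) a c) (hc : c ≠ N.d) :
    Relation.TransGen N.edgeRel a c := by
  induction h with
  | single hac => exact .single (N.edgeRel_of_pos hac hc)
  | tail _ hbc ih => exact .tail (ih (N.edgeRel_of_pos hbc hc).1) (N.edgeRel_of_pos hbc hc)

lemma sum_filter_pos_and (v : V) (q : V → Prop) [DecidablePred q] :
    ∑ u ∈ Finset.univ.filter (fun u => 0 < N.b v u ∧ q u), N.b v u
      = ∑ u ∈ Finset.univ.filter q, N.b v u := by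
  rw [Finset.sum_filter, Finset.sum_filter]
  refine Finset.sum_congr rfl fun u _ => ?_
  rcases (N.b_nonneg v u).eq_or_lt with h | h
  · simp [← h]
  · simp [h]

lemma sum_filter_pos_mem [DecidableEq V] (v : V) (S : Finset V) :
    ∑ u ∈ Finset.univ.filter (fun u => 0 < N.b v u ∧ u ∈ S), N.b v u = ∑ u ∈ S, N.b v u := by
  rw [N.sum_filter_pos_and, Finset.filter_univ_mem]

lemma sum_filter_pos_notMem [DecidableEq V] (v : V) (S : Finset V) :
    ∑ u ∈ Finset.univ.filter (fun u => 0 < N.b v u ∧ u ∉ S), N.b v u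
      = 1 - ∑ u ∈ S, N.b v u := by
  rw [N.sum_filter_pos_and, ← N.row_sum v,
    ← Finset.sum_filter_add_sum_filter_not Finset.univ (· ∈ S), Finset.filter_univ_mem]
  ring

variable {N}

lemma Acyclic.not_reflTransGen_of_pos (hN : N.Acyclic) {v w : V} (hv : v ≠ N.d)
    (hw : 0 < N.b v w) : ¬ Relation.ReflTransGen (fun a c => 0 < N.b a c) w v := fun h =>
  hN v (N.transGen_edgeRel_of_transGen (.head' hw h) hv)

lemma mem_activeSet_update_iff [DecidableEq V] {A Ahat : Set V} {θ : V → ℝ} {v w : V} (y : ℝ)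
    (s : ℕ) (hw : ¬ Relation.ReflTransGen (fun a c => 0 < N.b a c) w v) :
    w ∈ N.activeSet A Ahat (update θ v y) s ↔ w ∈ N.activeSet A Ahat θ s := by
  induction s generalizing w with
  | zero => rfl
  | succ s ih =>
    classical
    have hwv : w ≠ v := fun h => hw (h ▸ .refl)
    have hsum : ∑ u, (N.activeSet A Ahat (update θ v y) s).indicator (N.b w) u
        = ∑ u, (N.activeSet A Ahat θ s).indicator (N.b w) u := by
      refine Finset.sum_congr rfl fun u _ => ?_
      rcases (N.b_nonneg w u).eq_or_lt with hwu | hwu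
      · simp only [Set.indicator_apply, ← hwu, ite_self]
      · simp only [Set.indicator_apply, ih (fun h => hw (.head hwu h))]
    simp only [activeSet, Set.mem_union, Set.mem_ofPred_eq, update_of_ne hwv, hsum]

open scoped Classical in
lemma mem_activeSet_succ_iff {A : Set V} {θ : V → ℝ} {s : ℕ} {w : V} :
    w ∈ N.activeSet A ∅ θ (s + 1) ↔
      θ w ≤ ∑ u ∈ Finset.univ.filter (· ∈ N.activeSet A ∅ θ s), N.b w u := by
  simp [activeSet, Finset.sum_filter, Set.indicator_apply]

lemma measurableSet_mem_activeSet (A Ahat : Set V) (w : V) (s : ℕ) :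
    MeasurableSet {θ : V → ℝ | w ∈ N.activeSet A Ahat θ s} := by
  induction s generalizing w with
  | zero => exact MeasurableSet.const _
  | succ s ih =>
    simp only [activeSet, Set.mem_union, Set.ofPred_or, Set.ofPred_and]
    refine (MeasurableSet.const _).union ((MeasurableSet.const _).inter
      (measurableSet_le (measurable_pi_apply w) (Finset.measurable_sum _ fun u _ => ?_)))
    exact Measurable.ite (ih u) measurable_const measurable_const

/-- The event `Π_W = Q` of the linear threshold model with thresholds `θ`. -/
def activityEvent (A : Set V) (T : ℕ) (W : Set V) (Q : V → ℕ → Bool) : Set (V → ℝ) :=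
  {θ | ∀ w ∈ W, ∀ s ∈ Finset.Icc 1 T, (w ∈ N.activeSet A ∅ θ s ↔ Q w s = true)}

lemma measurableSet_activityEvent (A : Set V) (T : ℕ) (W : Set V) (Q : V → ℕ → Bool) :
    MeasurableSet (N.activityEvent A T W Q) :=
  measurableSet_setOfPred.2 <| Measurable.forall fun w => measurable_const.imp <|
    Measurable.forall fun s => measurable_const.imp <|
      (measurableSet_setOfPred.1 (N.measurableSet_mem_activeSet A ∅ w s)).iff measurable_const

lemma update_mem_activityEvent_iff [DecidableEq V] {A : Set V} {T : ℕ} {W : Set V}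
    {Q : V → ℕ → Bool} {v : V}
    (hW : ∀ w ∈ W, ¬ Relation.ReflTransGen (fun a c => 0 < N.b a c) w v) (θ : V → ℝ) (y : ℝ) :
    update θ v y ∈ N.activityEvent A T W Q ↔ θ ∈ N.activityEvent A T W Q :=
  forall₂_congr fun w hw => forall₂_congr fun s _ => by
    rw [mem_activeSet_update_iff y s (hW w hw)]

end InfoNetwork

instance : IsProbabilityMeasure unifMeasure :=
  ⟨by simp [unifMeasure, Real.volume_Ioo]⟩

lemma unifMeasure_apply (s : Set ℝ) : unifMeasure s = volume (s ∩ Set.Icc 0 1) := by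
  rw [unifMeasure, Measure.restrict_congr_set Ioo_ae_eq_Icc,
    Measure.restrict_apply' measurableSet_Icc]

lemma ae_mem_Ioo_unifMeasure : ∀ᵐ x ∂unifMeasure, x ∈ Set.Ioo (0 : ℝ) 1 :=
  ae_restrict_mem measurableSet_Ioo

lemma unifMeasure_Ioc {a b : ℝ} (ha : 0 ≤ a) (hb : b ≤ 1) :
    unifMeasure (Set.Ioc a b) = ENNReal.ofReal (b - a) := by
  rw [unifMeasure_apply, Set.inter_eq_left.2
    (Set.Ioc_subset_Icc_self.trans (Set.Icc_subset_Icc ha hb)), Real.volume_Ioc]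

lemma lintegral_unifMeasure_ite_le {F : ℝ} (h0 : 0 ≤ F) (h1 : F ≤ 1) (c₁ c₂ : ENNReal) :
    ∫⁻ y, (if y ≤ F then c₁ else c₂) ∂unifMeasure
      = c₁ * ENNReal.ofReal F + c₂ * ENNReal.ofReal (1 - F) := by
  have hIic : unifMeasure (Set.Iic F) = ENNReal.ofReal F := by
    have : Set.Iic F ∩ Set.Icc 0 1 = Set.Icc 0 F := by
      ext y
      simp only [Set.mem_inter_iff, Set.mem_Iic, Set.mem_Icc]
      constructor
      · rintro ⟨hyF, hy0, -⟩
        exact ⟨hy0, hyF⟩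
      · rintro ⟨hy0, hyF⟩
        exact ⟨hyF, hy0, hyF.trans h1⟩
    rw [unifMeasure_apply, this, Real.volume_Icc, sub_zero]
  have hIoi : unifMeasure (Set.Iic F)ᶜ = ENNReal.ofReal (1 - F) := by
    rw [measure_compl measurableSet_Iic (measure_ne_top _ _), measure_univ, hIic,
      ← ENNReal.ofReal_one, ← ENNReal.ofReal_sub _ h0]
  rw [← lintegral_add_compl _ measurableSet_Iic,
    setLIntegral_congr_fun measurableSet_Iic (fun y (hy : y ≤ F) => if_pos hy),
    setLIntegral_congr_fun measurableSet_Iic.compl (fun y (hy : ¬ y ≤ F) => if_neg hy),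
    setLIntegral_const, setLIntegral_const, hIic, hIoi]

lemma lintegral_pi_eq_of_lintegral_update {ι : Type*} [Fintype ι] [DecidableEq ι]
    {X : ι → Type*} [∀ i, MeasurableSpace (X i)] {μ : ∀ i, Measure (X i)}
    [∀ i, SigmaFinite (μ i)] {f g : (∀ i, X i) → ENNReal} (hf : Measurable f)
    (hg : Measurable g) (i : ι)
    (h : ∀ x, ∫⁻ y, f (update x i y) ∂μ i = ∫⁻ y, g (update x i y) ∂μ i) :
    ∫⁻ x, f x ∂Measure.pi μ = ∫⁻ x, g x ∂Measure.pi μ := by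
  rcases isEmpty_or_nonempty (∀ i, X i) with hX | ⟨⟨x⟩⟩
  · simp [lintegral_of_isEmpty]
  rw [lintegral_eq_lmarginal_univ x, lintegral_eq_lmarginal_univ x,
    lmarginal_erase' f hf (Finset.mem_univ i), lmarginal_erase' g hg (Finset.mem_univ i)]
  simp only [h]

lemma ae_mem_Ioo_pi {ι : Type*} [Fintype ι] :
    ∀ᵐ x ∂Measure.pi (fun _ : ι => unifMeasure), ∀ i, x i ∈ Set.Ioo (0 : ℝ) 1 :=
  ae_all_iff.2 fun _ => Measure.tendsto_eval_ae_ae.eventually ae_mem_Ioo_unifMeasure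

lemma ae_mem_Ioo_peMeasure (V : Type*) [Fintype V] (T : ℕ) :
    ∀ᵐ ω ∂peMeasure V T, (∀ w, ω.1 w ∈ Set.Ioo (0 : ℝ) 1) ∧ ∀ i, ω.2 i ∈ Set.Ioo (0 : ℝ) 1 :=
  (Measure.quasiMeasurePreserving_fst.ae ae_mem_Ioo_pi).and
    (Measure.quasiMeasurePreserving_snd.ae ae_mem_Ioo_pi)

lemma measurableSet_setOf_finset_apply {α β : Type*} [MeasurableSpace α] [Countable β]
    (g : α → Finset β) (hg : ∀ b, MeasurableSet {a | b ∈ g a}) {P : Finset β → α → Prop}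
    (hP : ∀ t, MeasurableSet {a | P t a}) : MeasurableSet {a | P (g a) a} := by
  classical
  have : {a | P (g a) a} = ⋃ t, {a | g a = t} ∩ {a | P t a} := by
    ext a
    simp
  rw [this]
  refine MeasurableSet.iUnion fun t => MeasurableSet.inter ?_ (hP t)
  simp only [Finset.ext_iff, Set.ofPred_forall]
  exact MeasurableSet.iInter fun b =>
    measurableSet_setOfPred.2 ((measurableSet_setOfPred.1 (hg b)).iff measurable_const)

section Pick

variable {V : Type*} [LinearOrder V] {s : Finset V} {p : V → ℝ} {x : ℝ} {d u : V}

def cumWeight (s : Finset V) (p : V → ℝ) (u : V) : ℝ := ∑ w ∈ s.filter (· ≤ u), p w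

lemma pick_eq_min' (h : (s.filter fun w => x ≤ cumWeight s p w).Nonempty) :
    pick s p x d = (s.filter fun w => x ≤ cumWeight s p w).min' h :=
  dif_pos h

lemma cumWeight_eq_add (hu : u ∈ s) :
    cumWeight s p u = ∑ w ∈ s.filter (· < u), p w + p u := by
  have : s.filter (· ≤ u) = insert u (s.filter (· < u)) := by
    ext w
    simp only [Finset.mem_filter, Finset.mem_insert, le_iff_lt_or_eq]
    constructor
    · rintro ⟨hw, hlt | rfl⟩
      exacts [Or.inr ⟨hw, hlt⟩, Or.inl rfl]
    · rintro (rfl | ⟨hw, hlt⟩)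
      exacts [⟨hu, Or.inr rfl⟩, ⟨hw, Or.inl hlt⟩]
  rw [cumWeight, this, Finset.sum_insert (by simp), add_comm]

lemma filter_le_cumWeight_nonempty (hs : ∑ w ∈ s, p w = 1) (hx : x ≤ 1) :
    (s.filter fun w => x ≤ cumWeight s p w).Nonempty := by
  have hne : s.Nonempty := Finset.nonempty_of_sum_ne_zero (by rw [hs]; exact one_ne_zero)
  refine ⟨s.max' hne, Finset.mem_filter.2 ⟨s.max'_mem hne, ?_⟩⟩
  rwa [cumWeight, Finset.filter_true_of_mem fun w hw => s.le_max' w hw, hs]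

lemma pick_mem (hs : ∑ w ∈ s, p w = 1) (hx : x ≤ 1) : pick s p x d ∈ s := by
  rw [pick_eq_min' (filter_le_cumWeight_nonempty hs hx)]
  exact Finset.mem_of_mem_filter _ (Finset.min'_mem _ _)

lemma forall_cumWeight_lt_iff (hp : ∀ w ∈ s, 0 ≤ p w) (hx : 0 < x) :
    (∀ w ∈ s, w < u → cumWeight s p w < x) ↔ ∑ w ∈ s.filter (· < u), p w < x := by
  refine ⟨fun h => ?_, fun h w hw hwu => lt_of_le_of_lt ?_ h⟩
  · rcases (s.filter (· < u)).eq_empty_or_nonempty with hempty | hne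
    · rwa [hempty, Finset.sum_empty]
    · set m := (s.filter (· < u)).max' hne
      obtain ⟨hm, hmu⟩ := Finset.mem_filter.1 ((s.filter (· < u)).max'_mem hne)
      have hfilter : s.filter (· ≤ m) = s.filter (· < u) := by
        ext w
        simp only [Finset.mem_filter, and_congr_right_iff]
        exact fun hw => ⟨fun hwm => hwm.trans_lt hmu,
          fun hwu => (s.filter (· < u)).le_max' w (by simp [hw, hwu])⟩
      simpa [cumWeight, hfilter] using h m hm hmu
  · exact Finset.sum_le_sum_of_subset_of_nonneg
      (Finset.monotone_filter_right s fun _ _ hv => hv.trans_lt hwu)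
      (fun w hw _ => hp w (Finset.mem_of_mem_filter w hw))

lemma pick_eq_iff (hp : ∀ w ∈ s, 0 ≤ p w) (hs : ∑ w ∈ s, p w = 1) (hu : u ∈ s)
    (hx : x ∈ Set.Ioo 0 1) :
    pick s p x d = u ↔ x ∈ Set.Ioc (∑ w ∈ s.filter (· < u), p w) (cumWeight s p u) := by
  rw [pick_eq_min' (filter_le_cumWeight_nonempty hs hx.2.le), Finset.min'_eq_iff,
    Set.mem_Ioc, and_comm, ← forall_cumWeight_lt_iff hp hx.1]
  simp only [Finset.mem_filter, hu, true_and, and_imp]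
  refine and_congr_left fun _ => forall₂_congr fun w _ => ?_
  constructor
  · exact fun h hwu => lt_of_not_ge fun hxw => absurd hwu (not_lt.2 (h hxw))
  · exact fun h hxw => not_lt.1 fun hwu => absurd hxw (not_le.2 (h hwu))

lemma unifMeasure_pick (hp : ∀ w ∈ s, 0 ≤ p w) (hs : ∑ w ∈ s, p w = 1) (u : V) :
    unifMeasure {x | pick s p x d = u} = if u ∈ s then ENNReal.ofReal (p u) else 0 := by
  split_ifs with hu
  · have hL : 0 ≤ ∑ w ∈ s.filter (· < u), p w :=
      Finset.sum_nonneg fun w hw => hp w (Finset.mem_of_mem_filter w hw)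
    have hC : cumWeight s p u ≤ 1 := hs ▸ Finset.sum_le_sum_of_subset_of_nonneg
      (Finset.filter_subset _ s) (fun w hw _ => hp w hw)
    have hae : {x | pick s p x d = u} =ᵐ[unifMeasure]
        Set.Ioc (∑ w ∈ s.filter (· < u), p w) (cumWeight s p u) :=
      Filter.eventuallyEq_set.2 (ae_mem_Ioo_unifMeasure.mono fun x hx => pick_eq_iff hp hs hu hx)
    rw [measure_congr hae, unifMeasure_Ioc hL hC, cumWeight_eq_add hu, add_sub_cancel_left]
  · refine measure_eq_zero_iff_ae_notMem.2 (ae_mem_Ioo_unifMeasure.mono fun x hx h => hu ?_)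
    exact h ▸ pick_mem hs hx.2.le

end Pick

lemma measurableSet_pick_eq {V : Type*} [LinearOrder V] [Countable V] (s : Finset V) (p : V → ℝ)
    (d u : V) :
    MeasurableSet {x : ℝ | pick s p x d = u} :=
  measurableSet_setOf_finset_apply (fun x => s.filter fun w => x ≤ cumWeight s p w)
    (fun w => by
      simp only [Finset.mem_filter]
      exact (MeasurableSet.const (w ∈ s)).inter measurableSet_Iic)
    (P := fun t _ => (if h : t.Nonempty then t.min' h else d) = u)
    (fun _ => MeasurableSet.const _)

section Choice

variable {V : Type*} [Fintype V] [LinearOrder V] (N : InfoNetwork V) (v : V)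

open scoped Classical in
/-- The node that `v` selects in one step of the PE process, from the active set `S` of the
previous step, its threshold `y = θ_v` and its selection variable `x = ξ_{v,t}`. -/
noncomputable def peChoice (S : Finset V) (y x : ℝ) : V :=
  if y ≤ ∑ u ∈ S, N.b v u then
    pick (Finset.univ.filter fun u => 0 < N.b v u ∧ u ∈ S)
      (fun w => N.b v w / ∑ u ∈ S, N.b v u) x N.d
  else
    pick (Finset.univ.filter fun u => 0 < N.b v u ∧ u ∉ S)
      (fun w => N.b v w / (1 - ∑ u ∈ S, N.b v u)) x N.d

variable {N v}

lemma sum_div_filter_pos_mem {S : Finset V} (hF : 0 < ∑ u ∈ S, N.b v u) :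
    ∑ w ∈ Finset.univ.filter (fun u => 0 < N.b v u ∧ u ∈ S), N.b v w / ∑ u ∈ S, N.b v u = 1 := by
  rw [← Finset.sum_div, N.sum_filter_pos_mem, div_self hF.ne']

lemma sum_div_filter_pos_notMem {S : Finset V} (hF : 0 < 1 - ∑ u ∈ S, N.b v u) :
    ∑ w ∈ Finset.univ.filter (fun u => 0 < N.b v u ∧ u ∉ S), N.b v w / (1 - ∑ u ∈ S, N.b v u)
      = 1 := by
  rw [← Finset.sum_div, N.sum_filter_pos_notMem, div_self hF.ne']

lemma peChoice_congr {S S' : Finset V} (h : ∀ w, 0 < N.b v w → (w ∈ S ↔ w ∈ S')) :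
    peChoice N v S = peChoice N v S' := by
  have hmem : (Finset.univ.filter fun u => 0 < N.b v u ∧ u ∈ S)
      = Finset.univ.filter fun u => 0 < N.b v u ∧ u ∈ S' :=
    Finset.filter_congr fun w _ => and_congr_right (h w)
  have hnotMem : (Finset.univ.filter fun u => 0 < N.b v u ∧ u ∉ S)
      = Finset.univ.filter fun u => 0 < N.b v u ∧ u ∉ S' :=
    Finset.filter_congr fun w _ => and_congr_right fun hw => not_congr (h w hw)
  have hsum : ∑ u ∈ S, N.b v u = ∑ u ∈ S', N.b v u := by
    rw [← N.sum_filter_pos_mem, hmem, N.sum_filter_pos_mem]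
  funext y x
  simp only [peChoice, hmem, hnotMem, hsum]

lemma peChoice_mem_iff {S : Finset V} {y x : ℝ} (hy : y ∈ Set.Ioo 0 1) (hx : x ∈ Set.Ioo 0 1) :
    peChoice N v S y x ∈ S ↔ y ≤ ∑ u ∈ S, N.b v u := by
  unfold peChoice
  split_ifs with h
  · have hs := sum_div_filter_pos_mem (hy.1.trans_le h)
    exact iff_of_true (Finset.mem_filter.1 (pick_mem hs hx.2.le)).2.2 h
  · have hs := sum_div_filter_pos_notMem
      (by linarith [hy.2, not_le.1 h] : 0 < 1 - ∑ u ∈ S, N.b v u)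
    exact iff_of_false (Finset.mem_filter.1 (pick_mem hs hx.2.le)).2.2 h

lemma unifMeasure_peChoice {S : Finset V} {u : V} (hu : 0 < N.b v u) {y : ℝ}
    (hy : y ∈ Set.Ioo 0 1) :
    unifMeasure {x | peChoice N v S y x = u} =
      if y ≤ ∑ w ∈ S, N.b v w then
        (if u ∈ S then ENNReal.ofReal (N.b v u / ∑ w ∈ S, N.b v w) else 0)
      else
        (if u ∈ S then 0 else ENNReal.ofReal (N.b v u / (1 - ∑ w ∈ S, N.b v w))) := by
  by_cases h : y ≤ ∑ w ∈ S, N.b v w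
  · have hF : 0 < ∑ w ∈ S, N.b v w := hy.1.trans_le h
    simp only [peChoice, if_pos h]
    rw [unifMeasure_pick (fun w _ => div_nonneg (N.b_nonneg v w) hF.le)
      (sum_div_filter_pos_mem hF)]
    simp [hu]
  · have hF : 0 < 1 - ∑ w ∈ S, N.b v w := by linarith [hy.2, not_le.1 h]
    simp only [peChoice, if_neg h]
    rw [unifMeasure_pick (fun w _ => div_nonneg (N.b_nonneg v w) hF.le)
      (sum_div_filter_pos_notMem hF)]
    simp [hu]

lemma lintegral_unifMeasure_peChoice (S : Finset V) {u : V} (hu : 0 < N.b v u) :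
    ∫⁻ y, unifMeasure {x | peChoice N v S y x = u} ∂unifMeasure = ENNReal.ofReal (N.b v u) := by
  set F := ∑ w ∈ S, N.b v w
  have hF0 : 0 ≤ F := Finset.sum_nonneg fun w _ => N.b_nonneg v w
  have hF1 : F ≤ 1 := N.row_sum v ▸ Finset.sum_le_sum_of_subset_of_nonneg
    (Finset.subset_univ S) fun w _ _ => N.b_nonneg v w
  rw [lintegral_congr_ae (ae_mem_Ioo_unifMeasure.mono fun y hy => unifMeasure_peChoice hu hy),
    lintegral_unifMeasure_ite_le hF0 hF1]
  by_cases huS : u ∈ S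
  · have hbF : N.b v u ≤ F := Finset.single_le_sum (fun w _ => N.b_nonneg v w) huS
    simp only [huS, if_true, zero_mul, add_zero]
    rw [← ENNReal.ofReal_mul (div_nonneg (N.b_nonneg v u) hF0),
      div_mul_cancel₀ _ (hu.trans_le hbF).ne']
  · have hbF : N.b v u ≤ 1 - F := by
      have := Finset.sum_le_sum_of_subset_of_nonneg (Finset.subset_univ (insert u S))
        fun w _ _ => N.b_nonneg v w
      rw [Finset.sum_insert huS, N.row_sum] at this
      linarith
    simp only [huS, if_false, zero_mul, zero_add]
    rw [← ENNReal.ofReal_mul (div_nonneg (N.b_nonneg v u) (by linarith)),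
      div_mul_cancel₀ _ (hu.trans_le hbF).ne']

variable (N v)

lemma measurableSet_peChoice_eq (S : Finset V) (u : V) :
    MeasurableSet {q : ℝ × ℝ | peChoice N v S q.1 q.2 = u} := by
  simp only [peChoice, apply_ite (· = u)]
  exact measurableSet_setOfPred.2 <| Measurable.ite
    (measurableSet_le measurable_fst measurable_const)
    (measurableSet_setOfPred.1 ((measurableSet_pick_eq _ _ _ u).preimage measurable_snd))
    (measurableSet_setOfPred.1 ((measurableSet_pick_eq _ _ _ u).preimage measurable_snd))

end Choice

section Path

variable {V : Type*} [Fintype V] [LinearOrder V] {N : InfoNetwork V} {T : ℕ} {A : Set V}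
  {θ : V → ℝ} {ξ : V × Fin T → ℝ}

open scoped Classical in
lemma pePath_succ_self {s : ℕ} (hs : s < T) (v : V) :
    pePath N T A θ ξ (s + 1) v (s + 1) =
      peChoice N v (Finset.univ.filter fun u => pePath N T A θ ξ s u 0 ∈ A) (θ v)
        (ξ (v, ⟨s, hs⟩)) := by
  simp only [pePath, if_true, dif_pos hs]
  rfl

lemma pePath_succ_zero (s : ℕ) (v : V) :
    pePath N T A θ ξ (s + 1) v 0 = pePath N T A θ ξ s (pePath N T A θ ξ (s + 1) v (s + 1)) 0 := by
  simp [pePath]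

lemma pePath_zero_mem_iff (hθ : ∀ w, θ w ∈ Set.Ioo 0 1) (hξ : ∀ i, ξ i ∈ Set.Ioo 0 1)
    {s : ℕ} (hs : s ≤ T) (w : V) :
    pePath N T A θ ξ s w 0 ∈ A ↔ w ∈ N.activeSet A ∅ θ s := by
  classical
  induction s generalizing w with
  | zero => simp [pePath, InfoNetwork.activeSet]
  | succ s ih =>
    have hsT : s < T := hs
    have hS : (Finset.univ.filter fun u => pePath N T A θ ξ s u 0 ∈ A)
        = Finset.univ.filter (· ∈ N.activeSet A ∅ θ s) :=
      Finset.filter_congr fun u _ => ih hsT.le u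
    rw [pePath_succ_zero, ih hsT.le, pePath_succ_self hsT, hS, InfoNetwork.mem_activeSet_succ_iff,
      ← peChoice_mem_iff (hθ w) (hξ (w, ⟨s, hsT⟩)), Finset.mem_filter]
    simp

open scoped Classical in
lemma pePath_succ_self_eq_peChoice (hθ : ∀ w, θ w ∈ Set.Ioo 0 1)
    (hξ : ∀ i, ξ i ∈ Set.Ioo 0 1) {s : ℕ} (hs : s < T) (v : V) :
    pePath N T A θ ξ (s + 1) v (s + 1) =
      peChoice N v (Finset.univ.filter (· ∈ N.activeSet A ∅ θ s)) (θ v) (ξ (v, ⟨s, hs⟩)) := by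
  rw [pePath_succ_self hs,
    Finset.filter_congr fun u _ => pePath_zero_mem_iff hθ hξ hs.le u]

lemma ae_eq_activityEvent (W : Set V) (Q : V → ℕ → Bool) :
    {ω : (V → ℝ) × (V × Fin T → ℝ) | ∀ w ∈ W, ∀ s ∈ Finset.Icc 1 T,
      (pePath N T A ω.1 ω.2 s w 0 ∈ A ↔ Q w s = true)}
      =ᵐ[peMeasure V T] N.activityEvent A T W Q ×ˢ Set.univ :=
  Filter.eventuallyEq_set.2 <| (ae_mem_Ioo_peMeasure V T).mono fun ω ⟨hθ, hξ⟩ => by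
    simp only [Set.mem_ofPred_eq, Set.mem_prod, Set.mem_univ, and_true,
      InfoNetwork.activityEvent]
    exact forall₂_congr fun w _ => forall₂_congr fun s hs => by
      rw [pePath_zero_mem_iff hθ hξ (Finset.mem_Icc.1 hs).2]

open scoped Classical in
lemma ae_eq_peChoice {s : ℕ} (hs : s < T) (v u : V) :
    {ω : (V → ℝ) × (V × Fin T → ℝ) | pePath N T A ω.1 ω.2 (s + 1) v (s + 1) = u}
      =ᵐ[peMeasure V T] {ω | peChoice N v (Finset.univ.filter (· ∈ N.activeSet A ∅ ω.1 s))
        (ω.1 v) (ω.2 (v, ⟨s, hs⟩)) = u} :=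
  Filter.eventuallyEq_set.2 <| (ae_mem_Ioo_peMeasure V T).mono fun ω ⟨hθ, hξ⟩ => by
    rw [Set.mem_ofPred_eq, Set.mem_ofPred_eq, pePath_succ_self_eq_peChoice hθ hξ hs]

end Path

theorem measure_prod_inter_peChoice {V ι : Type*} [Fintype V] [LinearOrder V] [Fintype ι]
    {N : InfoNetwork V} {v u : V} (hu : 0 < N.b v u) {G : Set (V → ℝ)} (hG : MeasurableSet G)
    (hGv : ∀ θ y, update θ v y ∈ G ↔ θ ∈ G) {S : (V → ℝ) → Finset V}
    (hS : ∀ w, MeasurableSet {θ | w ∈ S θ})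
    (hSv : ∀ θ y w, 0 < N.b v w → (w ∈ S (update θ v y) ↔ w ∈ S θ)) (i : ι) :
    ((thresholdMeasure V).prod (Measure.pi fun _ : ι => unifMeasure))
        (G ×ˢ Set.univ ∩ {ω : (V → ℝ) × (ι → ℝ) | peChoice N v (S ω.1) (ω.1 v) (ω.2 i) = u}) =
      ENNReal.ofReal (N.b v u) * thresholdMeasure V G := by
  set E := G ×ˢ Set.univ ∩ {ω : (V → ℝ) × (ι → ℝ) | peChoice N v (S ω.1) (ω.1 v) (ω.2 i) = u}
  have hE : MeasurableSet E := (hG.prod .univ).inter <|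
    measurableSet_setOf_finset_apply (fun ω : (V → ℝ) × (ι → ℝ) => S ω.1)
      (fun w => (hS w).preimage measurable_fst) fun t =>
        (measurableSet_peChoice_eq N v t u).preimage
          (((measurable_pi_apply v).comp measurable_fst).prodMk
            ((measurable_pi_apply i).comp measurable_snd))
  rw [Measure.prod_apply hE, ← lintegral_indicator_const hG, thresholdMeasure]
  refine lintegral_pi_eq_of_lintegral_update (measurable_measure_prodMk_left hE)
    (measurable_const.indicator hG) v fun θ => ?_
  by_cases hθ : θ ∈ G
  · have hslice : ∀ y, Prod.mk (update θ v y) ⁻¹' E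
        = eval i ⁻¹' {x | peChoice N v (S θ) y x = u} := fun y => by
      ext ξ
      simp [E, hGv, hθ, peChoice_congr (hSv θ y)]
    calc ∫⁻ y, Measure.pi (fun _ : ι => unifMeasure) (Prod.mk (update θ v y) ⁻¹' E)
            ∂unifMeasure
        = ∫⁻ y, unifMeasure {x | peChoice N v (S θ) y x = u} ∂unifMeasure :=
          lintegral_congr fun y => by
            rw [hslice, (measurePreserving_eval _ i).measure_preimage
              ((measurableSet_peChoice_eq N v (S θ) u).preimage
                measurable_prodMk_left).nullMeasurableSet]
      _ = ENNReal.ofReal (N.b v u) := lintegral_unifMeasure_peChoice (S θ) hu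
      _ = _ := by simp [hGv, hθ]
  · simp [E, hGv, hθ]

theorem pePath_step_indep_general {V : Type*} [Fintype V] [LinearOrder V] (N : InfoNetwork V)
    (hacyc : N.Acyclic) (T : ℕ) (A : Set V)
    (v : V) (hv : v ≠ N.d) (u : V) (hu : 0 < N.b v u)
    (t : ℕ) (ht1 : 1 ≤ t) (htT : t ≤ T) (Q : V → ℕ → Bool) :
    peMeasure V T ({ω | pePath N T A ω.1 ω.2 t v t = u} ∩
        {ω | ∀ w : V, 0 < N.b v w → ∀ s ∈ Finset.Icc 1 T,
          ((pePath N T A ω.1 ω.2 s w 0 ∈ A) ↔ Q w s = true)}) =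
      ENNReal.ofReal (N.b v u) *
        peMeasure V T {ω | ∀ w : V, 0 < N.b v w → ∀ s ∈ Finset.Icc 1 T,
          ((pePath N T A ω.1 ω.2 s w 0 ∈ A) ↔ Q w s = true)} := by
  classical
  obtain ⟨τ, rfl⟩ : ∃ τ, t = τ + 1 := ⟨t - 1, by omega⟩
  have hτ : τ < T := by omega
  have hW : ∀ w ∈ {w | 0 < N.b v w}, ¬ Relation.ReflTransGen (fun a c => 0 < N.b a c) w v :=
    fun w hw => hacyc.not_reflTransGen_of_pos hv hw
  set G := N.activityEvent A T {w | 0 < N.b v w} Q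
  calc _ = peMeasure V T ({ω | peChoice N v (Finset.univ.filter (· ∈ N.activeSet A ∅ ω.1 τ))
        (ω.1 v) (ω.2 (v, ⟨τ, hτ⟩)) = u} ∩ G ×ˢ Set.univ) :=
        measure_congr ((ae_eq_peChoice hτ v u).inter (ae_eq_activityEvent (N := N) _ Q))
    _ = ENNReal.ofReal (N.b v u) * thresholdMeasure V G := by
        rw [Set.inter_comm]
        exact measure_prod_inter_peChoice hu (N.measurableSet_activityEvent A T _ Q)
          (N.update_mem_activityEvent_iff hW)
          (S := fun θ => Finset.univ.filter (· ∈ N.activeSet A ∅ θ τ))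
          (fun w => by simpa using N.measurableSet_mem_activeSet A ∅ w τ)
          (fun θ y w hw => by simp [InfoNetwork.mem_activeSet_update_iff y τ (hW w hw)]) _
    _ = ENNReal.ofReal (N.b v u) * peMeasure V T (G ×ˢ Set.univ) := by
        rw [peMeasure, Measure.prod_prod, measure_univ, mul_one]
        rfl
    _ = _ := congrArg _ (measure_congr (ae_eq_activityEvent (N := N) (A := A) _ Q)).symm

/-- Acyclicity implies independence of choice: in the Path-Effect process on
an acyclic network, for a non-void node `v`, an out-neighbour `u ∈ Γ(v)` and a time
`1 ≤ t ≤ T`, the event `P^t_v[t] = u` is independent of the trajectories `Π_W` of the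
out-neighbourhood `W = Γ(v)`, and has probability `b v u`. -/
theorem pePath_step_indep {V : Type*} [Fintype V] [LinearOrder V] (N : InfoNetwork V)
    (hacyc : N.Acyclic) (T : ℕ) (A : Set V) (hA : A ⊆ {x : V | x ≠ N.d})
    (v : V) (hv : v ≠ N.d) (u : V) (hu : 0 < N.b v u)
    (t : ℕ) (ht1 : 1 ≤ t) (htT : t ≤ T) (Q : V → ℕ → Bool) :
    peMeasure V T ({ω | pePath N T A ω.1 ω.2 t v t = u} ∩
        {ω | ∀ w : V, 0 < N.b v w → ∀ s ∈ Finset.Icc 1 T,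
          ((pePath N T A ω.1 ω.2 s w 0 ∈ A) ↔ Q w s = true)}) =
      ENNReal.ofReal (N.b v u) *
        peMeasure V T {ω | ∀ w : V, 0 < N.b v w → ∀ s ∈ Finset.Icc 1 T,
          ((pePath N T A ω.1 ω.2 s w 0 ∈ A) ↔ Q w s = true)} :=
  pePath_step_indep_general N hacyc T A v hv u hu t ht1 htT Q
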